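/- arXiv:1901.07623 — 7 statements merged into one kernel-verified Lean document; each statement's English description precedes it below -/
import Mathlib

section
/- Let S and S' be antichain covers of Fin p. Then S' is a parent of S if and only if one of the following holds: (Rule 1) S' = S ∪ {c} for some c that is maximal independent of S; (Rule 2) S' = Min(S ∪ {σ}) for some σ : Finset (Fin p) such that (a) σ ⊊ σ' for some σ' ∈ S, (b) there exist no τ : Finset (Fin p) and σ'' ∈ S with σ ⊊ τ ⊊ σ'', (c) σ is not contained in any c that is maximal independent of S, and (d) Min(S ∪ {σ}) covers Fin p; (Rule 3) S' = Min(S ∪ {σ, σ'}) for two distinct finsets σ, σ' each satisfying conditions (a), (b) and (c) of Rule 2, such that neither Min(S ∪ {σ}) nor Min(S ∪ {σ'}) covers Fin p, while Min(S ∪ {σ, σ'}) covers Fin p. -/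
/-- `X` covers `Fin p`. -/
def Covers {p : ℕ} (X : Finset (Finset (Fin p))) : Prop :=
  ∀ i : Fin p, ∃ σ ∈ X, i ∈ σ

/-- `S` is an antichain cover of `Fin p`. -/
def AntichainCover {p : ℕ} (S : Finset (Finset (Fin p))) : Prop :=
  IsAntichain (· ⊆ ·) (S : Set (Finset (Fin p))) ∧ Covers S

/-- `S ⪯ S'` : for every `σ ∈ S` there exists `σ' ∈ S'` with `σ' ⊆ σ`. -/
def Preceq {p : ℕ} (S S' : Finset (Finset (Fin p))) : Prop :=
  ∀ σ ∈ S, ∃ σ' ∈ S', σ' ⊆ σ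

/-- `S'` is a parent of `S` in the poset of antichain covers of `Fin p` ordered by `⪯`. -/
def Parent {p : ℕ} (S S' : Finset (Finset (Fin p))) : Prop :=
  Preceq S S' ∧ S ≠ S' ∧
    ¬ ∃ S'' : Finset (Finset (Fin p)),
        AntichainCover S'' ∧ S'' ≠ S ∧ S'' ≠ S' ∧ Preceq S S'' ∧ Preceq S'' S'

/-- `c` is independent of `S`: incomparable with every member of `S`. -/
def IndependentOf {p : ℕ} (c : Finset (Fin p)) (S : Finset (Finset (Fin p))) : Prop :=
  ∀ σ ∈ S, ¬ σ ⊆ c ∧ ¬ c ⊆ σ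

/-- `c` is maximal independent of `S`. -/
def MaxIndependentOf {p : ℕ} (c : Finset (Fin p)) (S : Finset (Finset (Fin p))) : Prop :=
  IndependentOf c S ∧ ∀ d : Finset (Fin p), c ⊂ d → ¬ IndependentOf d S

/-- The `⊆`-minimal elements of a finite family `X` of finsets. -/
def minElts {p : ℕ} (X : Finset (Finset (Fin p))) : Finset (Finset (Fin p)) :=
  X.filter fun σ => ∀ τ ∈ X, τ ⊆ σ → τ = σ

/-- Conditions (a), (b), (c) of Rule 2, for a candidate clause `σ`. -/
def Rule2Cond {p : ℕ} (S : Finset (Finset (Fin p))) (σ : Finset (Fin p)) : Prop :=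
  (∃ σ' ∈ S, σ ⊂ σ') ∧
  (¬ ∃ τ : Finset (Fin p), ∃ σ'' ∈ S, σ ⊂ τ ∧ τ ⊂ σ'') ∧
  (∀ c : Finset (Fin p), MaxIndependentOf c S → ¬ σ ⊆ c)

/-!
Call a set `S`-free (`ContainsNoMember S`) if it contains no member of `S`. Every member `τ` of
`S' \ S` of a parent `S'` of `S` is a maximal `S`-free set: if `τ ⊂ ρ` with `ρ` free, absorbing
into `ρ` the members of `S'` that lie inside it gives an antichain cover strictly between `S` and
`S'`. Conversely, for a nonempty family `A` of maximal `S`-free sets, every antichain between `S`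
and `minElts (A ∪ S)` is `minElts (A' ∪ S)` for some `A' ⊆ A`, so `minElts (A ∪ S)` is a parent
of `S` exactly when no nonempty proper subfamily `A'` already yields a cover. A maximal `S`-free
set is either maximal independent of `S` (Rule 1; adding it never loses coverage) or strictly
inside a member of `S` (conditions (a)–(c)). Finally `S' \ S` has at most two members: if
`τ ∈ S' \ S` alone does not yield a cover, then `τ` plus one point `j` is a member of `S`
containing all of `S' \ S`, so `τ` together with any other new member, which must contain `j`,
already yields a cover.
-/

open Finset

section ParentRules

variable {p : ℕ} {S S' X Y A A' : Finset (Finset (Fin p))} {σ σ' τ ρ κ b c : Finset (Fin p)}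

lemma mem_minElts : σ ∈ minElts X ↔ σ ∈ X ∧ ∀ τ ∈ X, τ ⊆ σ → τ = σ :=
  mem_filter

lemma minElts_subset : minElts X ⊆ X :=
  filter_subset _ _

lemma isAntichain_minElts : IsAntichain (· ⊆ ·) (minElts X : Set (Finset (Fin p))) :=
  fun _ ha _ hb hne hab => hne ((mem_minElts.1 hb).2 _ (mem_minElts.1 ha).1 hab)

lemma exists_mem_minElts_subset (hσ : σ ∈ X) : ∃ μ ∈ minElts X, μ ⊆ σ := by
  obtain ⟨μ, hμσ, hμ⟩ := X.exists_le_minimal hσ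
  exact ⟨μ, mem_minElts.2 ⟨hμ.1, fun τ hτ hτμ => hμ.eq_of_le hτ hτμ⟩, hμσ⟩

lemma mem_minElts_of_subset (hXY : X ⊆ Y) (hσ : σ ∈ X) (h : σ ∈ minElts Y) : σ ∈ minElts X :=
  mem_minElts.2 ⟨hσ, fun τ hτ => (mem_minElts.1 h).2 τ (hXY hτ)⟩

lemma preceq_minElts_of_subset (h : X ⊆ Y) : Preceq X (minElts Y) :=
  fun _ hσ => exists_mem_minElts_subset (h hσ)

lemma preceq_minElts_mono (h : X ⊆ Y) : Preceq (minElts X) (minElts Y) :=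
  preceq_minElts_of_subset (minElts_subset.trans h)

lemma Preceq.eq_of_subset (hpre : Preceq S S')
    (hS' : IsAntichain (· ⊆ ·) (S' : Set (Finset (Fin p)))) (hσ : σ ∈ S) (hκ : κ ∈ S')
    (hσκ : σ ⊆ κ) : σ = κ := by
  obtain ⟨κ', hκ', hκ'σ⟩ := hpre σ hσ
  obtain rfl := hS'.eq hκ' hκ (hκ'σ.trans hσκ)
  exact Subset.antisymm hσκ hκ'σ

lemma Preceq.minElts_sdiff_union_eq (hpre : Preceq S S')
    (hS' : IsAntichain (· ⊆ ·) (S' : Set (Finset (Fin p)))) : minElts (S' \ S ∪ S) = S' := by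
  rw [sdiff_union_self_eq_union]
  ext σ
  simp only [mem_minElts, mem_union]
  constructor
  · rintro ⟨hσ | hσ, hmin⟩
    · exact hσ
    · obtain ⟨κ, hκ, hκσ⟩ := hpre σ hσ
      exact hmin κ (Or.inl hκ) hκσ ▸ hκ
  · refine fun hσ => ⟨Or.inl hσ, ?_⟩
    rintro τ (hτ | hτ) hτσ
    · exact hS'.eq hτ hσ hτσ
    · exact hpre.eq_of_subset hS' hτ hσ hτσ

lemma IsAntichain.minElts_eq (hX : IsAntichain (· ⊆ ·) (X : Set (Finset (Fin p)))) :
    minElts X = X := by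
  simpa using Preceq.minElts_sdiff_union_eq (fun σ hσ => ⟨σ, hσ, subset_rfl⟩) hX

def ContainsNoMember (S : Finset (Finset (Fin p))) (τ : Finset (Fin p)) : Prop :=
  ∀ σ ∈ S, ¬ σ ⊆ τ

lemma ContainsNoMember.notMem (h : ContainsNoMember S τ) : τ ∉ S :=
  fun hτ => h τ hτ subset_rfl

lemma containsNoMember_of_ssubset (hS : IsAntichain (· ⊆ ·) (S : Set (Finset (Fin p))))
    (hσ : σ ∈ S) (hτσ : τ ⊂ σ) : ContainsNoMember S τ :=
  fun _ hν hντ => hS hν hσ (hντ.trans_ssubset hτσ).ne (hντ.trans hτσ.subset)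

lemma Preceq.containsNoMember_of_mem_sdiff (hpre : Preceq S S')
    (hS' : IsAntichain (· ⊆ ·) (S' : Set (Finset (Fin p)))) (hτ : τ ∈ S' \ S) :
    ContainsNoMember S τ :=
  fun _ hσ hστ => (mem_sdiff.1 hτ).2 (hpre.eq_of_subset hS' hσ (mem_sdiff.1 hτ).1 hστ ▸ hσ)

lemma mem_minElts_union_left (hA : ∀ a ∈ A, Maximal (ContainsNoMember S) a) (hτ : τ ∈ A) :
    τ ∈ minElts (A ∪ S) := by
  refine mem_minElts.2 ⟨mem_union_left _ hτ, fun ν hν hντ => ?_⟩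
  rcases mem_union.1 hν with hνA | hνS
  · exact (hA ν hνA).eq_of_le (hA τ hτ).1 hντ
  · exact absurd hντ ((hA τ hτ).1 ν hνS)

lemma IndependentOf.containsNoMember (hc : IndependentOf c S) : ContainsNoMember S c :=
  fun σ hσ => (hc σ hσ).1

lemma IndependentOf.exists_maxIndependentOf (hc : IndependentOf c S) :
    ∃ d, c ⊆ d ∧ MaxIndependentOf d S := by
  obtain ⟨d, hcd, hd⟩ := Finite.exists_le_maximal (p := (IndependentOf · S)) hc
  exact ⟨d, hcd, hd.1, fun _ hde he => hd.not_prop_of_gt hde he⟩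

lemma MaxIndependentOf.maximal (hc : MaxIndependentOf c S) : Maximal (ContainsNoMember S) c :=
  maximal_iff_forall_gt.2 ⟨hc.1.containsNoMember, fun d hcd hd =>
    hc.2 d hcd fun σ hσ => ⟨hd σ hσ, fun hdσ => (hc.1 σ hσ).2 (hcd.subset.trans hdσ)⟩⟩

lemma Rule2Cond.maximal (hS : IsAntichain (· ⊆ ·) (S : Set (Finset (Fin p))))
    (hσ : Rule2Cond S σ) : Maximal (ContainsNoMember S) σ := by
  obtain ⟨⟨σ', hσ', hσσ'⟩, hgap, hind⟩ := hσ
  refine maximal_iff_forall_gt.2 ⟨containsNoMember_of_ssubset hS hσ' hσσ', fun τ hστ hτ => ?_⟩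
  by_cases hup : ∃ ν ∈ S, τ ⊆ ν
  · obtain ⟨ν, hν, hτν⟩ := hup
    exact hgap ⟨τ, ν, hν, hστ, ssubset_of_subset_of_ne hτν fun h => hτ.notMem (h ▸ hν)⟩
  · push Not at hup
    obtain ⟨c, hτc, hc⟩ :=
      IndependentOf.exists_maxIndependentOf (c := τ) fun ν hν => ⟨hτ ν hν, hup ν hν⟩
    exact hind c hc (hστ.subset.trans hτc)

lemma Maximal.maxIndependentOf_or_rule2Cond (hS : IsAntichain (· ⊆ ·) (S : Set (Finset (Fin p))))
    (hσ : Maximal (ContainsNoMember S) σ) : MaxIndependentOf σ S ∨ Rule2Cond S σ := by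
  by_cases hup : ∃ ν ∈ S, σ ⊆ ν
  · obtain ⟨ν, hν, hσν⟩ := hup
    refine Or.inr ⟨⟨ν, hν, ssubset_of_subset_of_ne hσν fun h => hσ.1.notMem (h ▸ hν)⟩, ?_,
      fun c hc hσc => ?_⟩
    · rintro ⟨τ, σ'', hσ'', hστ, hτσ''⟩
      exact hσ.not_prop_of_gt hστ (containsNoMember_of_ssubset hS hσ'' hτσ'')
    · obtain rfl := hσ.eq_of_le hc.1.containsNoMember hσc
      exact (hc.1 ν hν).2 hσν
  · push Not at hup
    exact Or.inl ⟨fun ν hν => ⟨hσ.1 ν hν, hup ν hν⟩,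
      fun d hσd hd => hσ.not_prop_of_gt hσd hd.containsNoMember⟩

lemma minElts_insert_of_independentOf (hS : IsAntichain (· ⊆ ·) (S : Set (Finset (Fin p))))
    (hc : IndependentOf c S) : minElts (insert c S) = insert c S := by
  refine IsAntichain.minElts_eq ?_
  rw [coe_insert]
  exact hS.insert (fun ν hν _ => (hc ν hν).1) (fun ν hν _ => (hc ν hν).2)

lemma Maximal.rule2Cond_of_not_covers (hS : AntichainCover S)
    (hσ : Maximal (ContainsNoMember S) σ) (hcov : ¬ Covers (minElts (insert σ S))) :
    Rule2Cond S σ := by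
  refine (hσ.maxIndependentOf_or_rule2Cond hS.1).resolve_left fun hmax => hcov fun i => ?_
  obtain ⟨ν, hν, hi⟩ := hS.2 i
  rw [minElts_insert_of_independentOf hS.1 hmax.1]
  exact ⟨ν, mem_insert_of_mem hν, hi⟩

lemma sdiff_subset_of_preceq_minElts (hA : ∀ a ∈ A, Maximal (ContainsNoMember S) a)
    (hS' : IsAntichain (· ⊆ ·) (S' : Set (Finset (Fin p)))) (hpre : Preceq S S')
    (hpre' : Preceq S' (minElts (A ∪ S))) : S' \ S ⊆ A := by
  intro τ hτ
  have hτfree := hpre.containsNoMember_of_mem_sdiff hS' hτ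
  obtain ⟨κ, hκ, hκτ⟩ := hpre' τ (mem_sdiff.1 hτ).1
  rcases mem_union.1 (minElts_subset hκ) with hκA | hκS
  · exact (hA κ hκA).eq_of_le hτfree hκτ ▸ hκA
  · exact absurd hκτ (hτfree κ hκS)

lemma parent_minElts_union (hS : IsAntichain (· ⊆ ·) (S : Set (Finset (Fin p))))
    (hA : ∀ a ∈ A, Maximal (ContainsNoMember S) a) (hAne : A.Nonempty)
    (hcov : ∀ A' ⊆ A, A'.Nonempty → A' ≠ A → ¬ Covers (minElts (A' ∪ S))) :
    Parent S (minElts (A ∪ S)) := by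
  obtain ⟨a, ha⟩ := hAne
  refine ⟨preceq_minElts_of_subset subset_union_right, fun h => (hA a ha).1.notMem ?_, ?_⟩
  · exact h ▸ mem_minElts_union_left hA ha
  rintro ⟨S'', ⟨hS''a, hS''c⟩, hne, hne', hpre, hpre'⟩
  have heq := hpre.minElts_sdiff_union_eq hS''a
  rcases (S'' \ S).eq_empty_or_nonempty with hempty | hnonempty
  · rw [hempty, empty_union, hS.minElts_eq] at heq
    exact hne heq.symm
  by_cases hall : S'' \ S = A
  · rw [hall] at heq
    exact hne' heq.symm
  exact hcov _ (sdiff_subset_of_preceq_minElts hA hS''a hpre hpre') hnonempty hall (by rwa [heq])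

lemma Parent.not_covers_minElts_union (hpar : Parent S (minElts (A ∪ S)))
    (hA : ∀ a ∈ A, Maximal (ContainsNoMember S) a) (hA'A : A' ⊆ A) (hA' : A'.Nonempty)
    (hne : A' ≠ A) : ¬ Covers (minElts (A' ∪ S)) := by
  intro hcov
  obtain ⟨a, ha⟩ := hA'
  obtain ⟨b, hb, hbA'⟩ := exists_of_ssubset (ssubset_of_subset_of_ne hA'A hne)
  have hA'max : ∀ a ∈ A', Maximal (ContainsNoMember S) a := fun a ha => hA a (hA'A ha)
  refine hpar.2.2 ⟨minElts (A' ∪ S), ⟨isAntichain_minElts, hcov⟩, fun h => ?_, fun h => ?_,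
    preceq_minElts_of_subset subset_union_right, preceq_minElts_mono (union_subset_union_left hA'A)⟩
  · exact (hA'max a ha).1.notMem (h ▸ mem_minElts_union_left hA'max ha)
  · rcases mem_union.1 (minElts_subset (h ▸ mem_minElts_union_left hA hb)) with hbA | hbS
    · exact hbA' hbA
    · exact (hA b hb).1.notMem hbS

/-- The members of `S'` inside `ρ` replaced by `ρ`; adding `S` keeps it above `S`. -/
def absorbInto (S S' : Finset (Finset (Fin p))) (ρ : Finset (Fin p)) : Finset (Finset (Fin p)) :=
  minElts (insert ρ ({κ ∈ S' | ¬ κ ⊆ ρ} ∪ S))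

lemma self_mem_absorbInto (hρ : ∀ σ ∈ S, σ ⊆ ρ → σ = ρ) : ρ ∈ absorbInto S S' ρ := by
  refine mem_minElts.2 ⟨mem_insert_self _ _, fun ν hν hνρ => ?_⟩
  rcases mem_insert.1 hν with rfl | hν
  · rfl
  rcases mem_union.1 hν with hν | hν
  · exact absurd hνρ (mem_filter.1 hν).2
  · exact hρ ν hν hνρ

lemma mem_absorbInto (hpre : Preceq S S') (hS' : IsAntichain (· ⊆ ·) (S' : Set (Finset (Fin p))))
    (hτ : τ ∈ S') (hτρ : τ ⊆ ρ) (hκ : κ ∈ S') (hκρ : ¬ κ ⊆ ρ) : κ ∈ absorbInto S S' ρ := by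
  refine mem_minElts.2 ⟨mem_insert_of_mem (mem_union_left _ (mem_filter.2 ⟨hκ, hκρ⟩)),
    fun ν hν hνκ => ?_⟩
  rcases mem_insert.1 hν with rfl | hν
  · exact absurd (hS'.eq hτ hκ (hτρ.trans hνκ) ▸ hτρ) hκρ
  rcases mem_union.1 hν with hν | hν
  · exact hS'.eq (mem_filter.1 hν).1 hκ hνκ
  · exact hpre.eq_of_subset hS' hν hκ hνκ

lemma covers_absorbInto (hpre : Preceq S S') (hS' : AntichainCover S') (hτ : τ ∈ S')
    (hτρ : τ ⊆ ρ) (hρ : ∀ σ ∈ S, σ ⊆ ρ → σ = ρ) : Covers (absorbInto S S' ρ) := by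
  intro i
  obtain ⟨κ, hκ, hi⟩ := hS'.2 i
  by_cases hκρ : κ ⊆ ρ
  · exact ⟨ρ, self_mem_absorbInto hρ, hκρ hi⟩
  · exact ⟨κ, mem_absorbInto hpre hS'.1 hτ hτρ hκ hκρ, hi⟩

lemma absorbInto_preceq (hpre : Preceq S S') (hτ : τ ∈ S') (hτρ : τ ⊆ ρ) :
    Preceq (absorbInto S S' ρ) S' := by
  intro ν hν
  rcases mem_insert.1 (minElts_subset hν) with rfl | hν
  · exact ⟨τ, hτ, hτρ⟩
  rcases mem_union.1 hν with hν | hν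
  · exact ⟨ν, (mem_filter.1 hν).1, subset_rfl⟩
  · exact hpre ν hν

lemma notMem_absorbInto (hτS : τ ∉ S) (hτρ : τ ⊂ ρ) : τ ∉ absorbInto S S' ρ := by
  intro hτ
  rcases mem_insert.1 (minElts_subset hτ) with h | hτ
  · exact hτρ.ne h
  rcases mem_union.1 hτ with hτ | hτ
  · exact (mem_filter.1 hτ).2 hτρ.subset
  · exact hτS hτ

lemma Parent.mem_and_forall_subset_of_ssubset (hpar : Parent S S') (hS' : AntichainCover S')
    (hτ : τ ∈ S' \ S) (hτρ : τ ⊂ ρ) (hρ : ∀ σ ∈ S, σ ⊆ ρ → σ = ρ) :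
    ρ ∈ S ∧ ∀ κ ∈ S' \ S, κ ⊆ ρ := by
  obtain ⟨hτS', hτS⟩ := mem_sdiff.1 hτ
  by_contra hcon
  refine hpar.2.2 ⟨absorbInto S S' ρ,
    ⟨isAntichain_minElts, covers_absorbInto hpar.1 hS' hτS' hτρ.subset hρ⟩,
    fun h => hcon ⟨h ▸ self_mem_absorbInto hρ, fun κ hκ => ?_⟩,
    fun h => notMem_absorbInto hτS hτρ (h ▸ hτS'),
    preceq_minElts_of_subset (subset_union_right.trans (subset_insert _ _)),
    absorbInto_preceq hpar.1 hτS' hτρ.subset⟩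
  by_contra hκρ
  exact (mem_sdiff.1 hκ).2 (h ▸ mem_absorbInto hpar.1 hS'.1 hτS' hτρ.subset (mem_sdiff.1 hκ).1 hκρ)

lemma Parent.maximal_of_mem_sdiff (hpar : Parent S S') (hS' : AntichainCover S')
    (hτ : τ ∈ S' \ S) : Maximal (ContainsNoMember S) τ :=
  maximal_iff_forall_gt.2 ⟨hpar.1.containsNoMember_of_mem_sdiff hS'.1 hτ, fun _ hτρ hρ =>
    hρ.notMem (hpar.mem_and_forall_subset_of_ssubset hS' hτ hτρ
      fun σ hσ hσρ => absurd hσρ (hρ σ hσ)).1⟩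

lemma Parent.sdiff_nonempty (hpar : Parent S S')
    (hS : IsAntichain (· ⊆ ·) (S : Set (Finset (Fin p))))
    (hS' : IsAntichain (· ⊆ ·) (S' : Set (Finset (Fin p)))) : (S' \ S).Nonempty :=
  nonempty_iff_ne_empty.2 fun h => hpar.2.1 (by
    rw [← hpar.1.minElts_sdiff_union_eq hS', h, empty_union, hS.minElts_eq])

lemma Parent.not_covers_minElts_union_of_subset_sdiff (hpar : Parent S S')
    (hS' : AntichainCover S') (hA : A ⊆ S' \ S) (hAne : A.Nonempty) (hne : A ≠ S' \ S) :
    ¬ Covers (minElts (A ∪ S)) := by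
  have hpar' : Parent S (minElts (S' \ S ∪ S)) := by
    rwa [hpar.1.minElts_sdiff_union_eq hS'.1]
  exact hpar'.not_covers_minElts_union (fun _ hτ => hpar.maximal_of_mem_sdiff hS' hτ) hA hAne hne

lemma Parent.not_covers_minElts_insert (hpar : Parent S S') (hS' : AntichainCover S')
    (hb : b ∈ S' \ S) (hc : c ∈ S' \ S) (hbc : b ≠ c) : ¬ Covers (minElts (insert b S)) := by
  rw [insert_eq]
  exact hpar.not_covers_minElts_union_of_subset_sdiff hS' (singleton_subset_iff.2 hb)
    (singleton_nonempty b) fun h => hbc (mem_singleton.1 (h ▸ hc)).symm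

lemma Maximal.exists_insert_mem_of_not_covers (hb : Maximal (ContainsNoMember S) b)
    (hS : AntichainCover S) (hcov : ¬ Covers (minElts (insert b S))) :
    ∃ j ∉ b, insert j b ∈ S := by
  simp only [Covers, not_forall, not_exists, not_and] at hcov
  obtain ⟨j, hj⟩ := hcov
  have hjb : j ∉ b := hj b (by
    rw [insert_eq]
    exact mem_minElts_union_left (by simpa using hb) (mem_singleton_self b))
  obtain ⟨σ, hσ, hjσ⟩ := hS.2 j
  have hbσ : b ⊆ σ := by
    by_contra hbσ
    refine hj σ (mem_minElts.2 ⟨mem_insert_of_mem hσ, fun ν hν hνσ => ?_⟩) hjσ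
    rcases mem_insert.1 hν with rfl | hν
    · exact absurd hνσ hbσ
    · exact hS.1.eq hν hσ hνσ
  refine ⟨j, hjb, ?_⟩
  rcases (insert_subset hjσ hbσ).eq_or_ssubset with h | h
  · exact h ▸ hσ
  · exact absurd (containsNoMember_of_ssubset hS.1 hσ h) (hb.not_prop_of_gt (ssubset_insert hjb))

lemma Parent.card_sdiff_le_two (hpar : Parent S S') (hS : AntichainCover S)
    (hS' : AntichainCover S') : #(S' \ S) ≤ 2 := by
  by_contra! h
  obtain ⟨τ₁, h₁, τ₂, h₂, τ₃, h₃, h₁₂, h₁₃, h₂₃⟩ := two_lt_card.1 h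
  have hmax := fun τ (hτ : τ ∈ S' \ S) => hpar.maximal_of_mem_sdiff hS' hτ
  obtain ⟨j, hj, hσ⟩ := (hmax τ₁ h₁).exists_insert_mem_of_not_covers hS
    (hpar.not_covers_minElts_insert hS' h₁ h₂ h₁₂)
  have hsub := (hpar.mem_and_forall_subset_of_ssubset hS' h₁ (ssubset_insert hj)
    fun _ hν => hS.1.eq hν hσ).2
  have hj₂ : j ∈ τ₂ := by
    by_contra hj₂
    exact h₁₂ (hS'.1.eq (mem_sdiff.1 h₂).1 (mem_sdiff.1 h₁).1
      ((subset_insert_iff_of_notMem hj₂).1 (hsub τ₂ h₂))).symm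
  have hpair : {τ₁, τ₂} ⊆ S' \ S := insert_subset h₁ (singleton_subset_iff.2 h₂)
  have hpair_max : ∀ a ∈ ({τ₁, τ₂} : Finset _), Maximal (ContainsNoMember S) a :=
    fun a ha => hmax a (hpair ha)
  refine hpar.not_covers_minElts_union_of_subset_sdiff hS' hpair (insert_nonempty _ _)
    (fun h => by
      rw [← h, mem_insert, mem_singleton] at h₃
      exact h₃.elim (h₁₃ ·.symm) (h₂₃ ·.symm)) fun i => ?_
  obtain ⟨κ, hκ, hi⟩ := hS'.2 i
  by_cases hκS : κ ∈ S
  · refine ⟨κ, mem_minElts_of_subset (union_subset_union_left hpair) (mem_union_right _ hκS) ?_, hi⟩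
    rwa [hpar.1.minElts_sdiff_union_eq hS'.1]
  rcases mem_insert.1 (hsub κ (mem_sdiff.2 ⟨hκ, hκS⟩) hi) with rfl | hi
  · exact ⟨τ₂, mem_minElts_union_left hpair_max (by simp), hj₂⟩
  · exact ⟨τ₁, mem_minElts_union_left hpair_max (by simp), hi⟩

lemma parent_minElts_insert (hS : IsAntichain (· ⊆ ·) (S : Set (Finset (Fin p))))
    (hσ : Maximal (ContainsNoMember S) σ) : Parent S (minElts (insert σ S)) := by
  rw [insert_eq]
  exact parent_minElts_union hS (by simpa using hσ) (singleton_nonempty σ)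
    fun _ hA hAne hne => absurd (hAne.subset_singleton_iff.1 hA) hne

lemma parent_minElts_insert_insert (hS : IsAntichain (· ⊆ ·) (S : Set (Finset (Fin p))))
    (hσ : Maximal (ContainsNoMember S) σ) (hσ' : Maximal (ContainsNoMember S) σ')
    (hcov : ¬ Covers (minElts (insert σ S))) (hcov' : ¬ Covers (minElts (insert σ' S))) :
    Parent S (minElts (insert σ' (insert σ S))) := by
  rw [insert_eq σ S, ← insert_union]
  refine parent_minElts_union hS (by simp [hσ, hσ']) (insert_nonempty _ _)
    fun A hA hAne hne => ?_
  by_cases hσ'A : σ' ∈ A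
  · have hσA : σ ∉ A := fun hσA => hne (Subset.antisymm hA (insert_subset hσ'A
      (singleton_subset_iff.2 hσA)))
    rw [pair_comm, subset_insert_iff_of_notMem hσA, hAne.subset_singleton_iff] at hA
    rwa [hA, ← insert_eq]
  · rw [subset_insert_iff_of_notMem hσ'A, hAne.subset_singleton_iff] at hA
    rwa [hA, ← insert_eq]

end ParentRules

theorem parent_iff_rules (p : ℕ) (S S' : Finset (Finset (Fin p)))
    (hS : AntichainCover S) (hS' : AntichainCover S') :
    Parent S S' ↔
      (∃ c : Finset (Fin p), MaxIndependentOf c S ∧ S' = insert c S) ∨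
      (∃ σ : Finset (Fin p), Rule2Cond S σ ∧ Covers (minElts (insert σ S)) ∧
        S' = minElts (insert σ S)) ∨
      (∃ σ σ' : Finset (Fin p), σ ≠ σ' ∧ Rule2Cond S σ ∧ Rule2Cond S σ' ∧
        ¬ Covers (minElts (insert σ S)) ∧ ¬ Covers (minElts (insert σ' S)) ∧
        Covers (minElts (insert σ' (insert σ S))) ∧
        S' = minElts (insert σ' (insert σ S))) := by
  constructor
  · intro hpar
    have hBS := hpar.1.minElts_sdiff_union_eq hS'.1
    have hmax := fun τ (hτ : τ ∈ S' \ S) => hpar.maximal_of_mem_sdiff hS' hτ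
    have hcard := hpar.card_sdiff_le_two hS hS'
    have hpos := (hpar.sdiff_nonempty hS.1 hS'.1).card_pos
    obtain h | h : #(S' \ S) = 1 ∨ #(S' \ S) = 2 := by omega
    · obtain ⟨b, hb⟩ := card_eq_one.1 h
      have hb_max := hmax b (by simp [hb])
      rw [hb, ← insert_eq] at hBS
      rcases hb_max.maxIndependentOf_or_rule2Cond hS.1 with hb_ind | hb_rule
      · exact Or.inl ⟨b, hb_ind, by rw [← hBS, minElts_insert_of_independentOf hS.1 hb_ind.1]⟩
      · exact Or.inr (Or.inl ⟨b, hb_rule, hBS ▸ hS'.2, hBS.symm⟩)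
    · obtain ⟨b₁, b₂, hne, hb⟩ := card_eq_two.1 h
      have h₁ : b₁ ∈ S' \ S := by simp [hb]
      have h₂ : b₂ ∈ S' \ S := by simp [hb]
      have hnc₁ := hpar.not_covers_minElts_insert hS' h₁ h₂ hne
      have hnc₂ := hpar.not_covers_minElts_insert hS' h₂ h₁ hne.symm
      rw [hb, insert_union, ← insert_eq] at hBS
      exact Or.inr (Or.inr ⟨b₂, b₁, hne.symm, (hmax b₂ h₂).rule2Cond_of_not_covers hS hnc₂,
        (hmax b₁ h₁).rule2Cond_of_not_covers hS hnc₁, hnc₂, hnc₁, hBS ▸ hS'.2, hBS.symm⟩)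
  · rintro (⟨c, hc, rfl⟩ | ⟨σ, hσ, -, rfl⟩ | ⟨σ, σ', -, hσ, hσ', hcov, hcov', -, rfl⟩)
    · rw [← minElts_insert_of_independentOf hS.1 hc.1]
      exact parent_minElts_insert hS.1 hc.maximal
    · exact parent_minElts_insert hS.1 (hσ.maximal hS.1)
    · exact parent_minElts_insert_insert hS.1 (hσ.maximal hS.1) (hσ'.maximal hS.1) hcov hcov'
end

section
/- Let S be an antichain cover of Fin p and let c be maximal independent of S. Then S ∪ {c} is an antichain cover of Fin p and S ∪ {c} is a parent of S. -/
/-! Let `T` be an antichain cover with `S ⪯ T ⪯ insert c S`. A member `τ` of `T` containing some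
`σ ∈ S` equals `σ`: the member of `T` below `σ` also lies below `τ`, so it is `τ`. Hence a member
of `T` above `c` contains no member of `S`, and it lies in no member of `S` since `c` does not: it
is independent of `S`, hence equal to `c` by maximality. This gives `T ⊆ insert c S`, and then
`S ⊆ T` because `S` is an antichain and `c` lies in no member of `S`. -/

theorem Finset.eq_or_eq_insert_of_subset_of_subset {α : Type*} [DecidableEq α] {s t : Finset α}
    {a : α} (hst : s ⊆ t) (hts : t ⊆ insert a s) : t = s ∨ t = insert a s := by
  by_cases ha : a ∈ t
  · exact Or.inr (hts.antisymm (Finset.insert_subset ha hst))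
  · exact Or.inl (((Finset.subset_insert_iff_of_notMem ha).1 hts).antisymm hst)

section

variable {p : ℕ} {S T : Finset (Finset (Fin p))} {c : Finset (Fin p)}

theorem IndependentOf.notMem (hc : IndependentOf c S) : c ∉ S :=
  fun h => (hc c h).2 subset_rfl

theorem Covers.mono (hS : Covers S) (hST : S ⊆ T) : Covers T := fun i =>
  let ⟨σ, hσ, hi⟩ := hS i
  ⟨σ, hST hσ, hi⟩

theorem AntichainCover.insert (hS : AntichainCover S) (hc : IndependentOf c S) :
    AntichainCover (insert c S) := by
  refine ⟨?_, hS.2.mono (Finset.subset_insert c S)⟩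
  rw [Finset.coe_insert]
  exact hS.1.insert (fun σ hσ _ => (hc σ hσ).1) (fun σ hσ _ => (hc σ hσ).2)

theorem Preceq.of_subset (hST : S ⊆ T) : Preceq S T :=
  fun σ hσ => ⟨σ, hST hσ, subset_rfl⟩

theorem Preceq.eq_of_subset_s4 (hST : Preceq S T) (hT : IsAntichain (· ⊆ ·) (T : Set (Finset (Fin p))))
    {σ τ : Finset (Fin p)} (hσ : σ ∈ S) (hτ : τ ∈ T) (hστ : σ ⊆ τ) : σ = τ := by
  obtain ⟨τ', hτ', hτ'σ⟩ := hST σ hσ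
  obtain rfl : τ' = τ := hT.eq hτ' hτ (hτ'σ.trans hστ)
  exact hστ.antisymm hτ'σ

theorem MaxIndependentOf.eq_of_subset_s4 (hc : MaxIndependentOf c S) {τ : Finset (Fin p)}
    (hcτ : c ⊆ τ) (hτ : ∀ σ ∈ S, σ ⊆ τ → σ = τ) : c = τ := by
  by_contra hne
  obtain ⟨σ, hσ, hστ | hτσ⟩ : ∃ σ ∈ S, σ ⊆ τ ∨ τ ⊆ σ := by
    simpa only [IndependentOf, not_forall, not_and_or, not_not, exists_prop] using
      hc.2 τ (hcτ.ssubset_of_ne hne)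
  · exact (hc.1 σ hσ).2 (hτ σ hσ hστ ▸ hcτ)
  · exact (hc.1 σ hσ).2 (hcτ.trans hτσ)

theorem Preceq.subset_insert_of_maxIndependentOf (hc : MaxIndependentOf c S) (hST : Preceq S T)
    (hT : IsAntichain (· ⊆ ·) (T : Set (Finset (Fin p)))) (hTc : Preceq T (insert c S)) :
    T ⊆ insert c S := by
  intro τ hτ
  have hτS : ∀ σ ∈ S, σ ⊆ τ → σ = τ := fun σ hσ => hST.eq_of_subset_s4 hT hσ hτ
  obtain ⟨σ, hσ, hστ⟩ := hTc τ hτ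
  rcases Finset.mem_insert.1 hσ with rfl | hσS
  · exact hc.eq_of_subset_s4 hστ hτS ▸ Finset.mem_insert_self σ S
  · exact hτS σ hσS hστ ▸ Finset.mem_insert_of_mem hσS

theorem Preceq.subset_of_subset_insert (hS : IsAntichain (· ⊆ ·) (S : Set (Finset (Fin p))))
    (hc : IndependentOf c S) (hST : Preceq S T) (hTc : T ⊆ insert c S) : S ⊆ T := by
  intro σ hσ
  obtain ⟨τ, hτ, hτσ⟩ := hST σ hσ
  rcases Finset.mem_insert.1 (hTc hτ) with rfl | hτS
  · exact absurd hτσ (hc σ hσ).2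
  · exact hS.eq hτS hσ hτσ ▸ hτ

end

theorem insert_maxIndependent_isParent (p : ℕ) (S : Finset (Finset (Fin p)))
    (c : Finset (Fin p)) (hS : AntichainCover S) (hc : MaxIndependentOf c S) :
    AntichainCover (insert c S) ∧ Parent S (insert c S) := by
  refine ⟨hS.insert hc.1, Preceq.of_subset (Finset.subset_insert c S),
    fun h => hc.1.notMem (h ▸ Finset.mem_insert_self c S), ?_⟩
  rintro ⟨T, ⟨hT, -⟩, hT_ne_S, hT_ne_cS, hST, hTcS⟩
  have hT_sub : T ⊆ insert c S := hST.subset_insert_of_maxIndependentOf hc hT hTcS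
  have hS_sub : S ⊆ T := hST.subset_of_subset_insert hS.1 hc.1 hT_sub
  exact (Finset.eq_or_eq_insert_of_subset_of_subset hS_sub hT_sub).elim hT_ne_S hT_ne_cS
end

section
/- Let S and S' be antichain covers of Fin p such that S' is a parent of S. Then {s : Fin p → Bool | f_S s = true} is a strict subset of {s : Fin p → Bool | f_{S'} s = true}, and the cardinality of {s : Fin p → Bool | f_{S'} s = true ∧ f_S s = false} is equal to 1 or 2. -/
/-- The Boolean function associated with a family `S` of subsets of `Fin p`. -/
def fS {p : ℕ} (S : Finset (Finset (Fin p))) (s : Fin p → Bool) : Bool :=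
  decide (∃ σ ∈ S, ∀ k ∈ σ, s k = true)

/-!
A family `S` is encoded by its up-closure, an upper set of `Finset (Fin p)`: `fS S` is the
indicator of that upper set, `⪯` is inclusion of up-closures, and an antichain is the set of
minimal elements of its up-closure. The minimal elements of an upper set `V` cover `Fin p` as
soon as `#V` is odd, since an upper set that does not depend on coordinate `i` is paired off
by toggling `i`. If the up-closures of `S ⪯ S'` differed by three or more sets, adding one or
two maximal sets of the difference to the up-closure of `S` would give an upper set of odd
size strictly in between, and its minimal elements an intermediate antichain cover.
-/

open Finset

section UpperSets

variable {β : Type*} [PartialOrder β] [DecidableEq β]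

theorem isUpperSet_insert_of_maximal {U U' : Finset β} (hU : IsUpperSet (U : Set β))
    (hU' : IsUpperSet (U' : Set β)) {a : β} (ha : Maximal (· ∈ U' \ U) a) :
    IsUpperSet ((insert a U : Finset β) : Set β) := by
  intro b c hbc hb
  rw [coe_insert] at hb ⊢
  rcases hb with rfl | hb
  · by_cases hc : c ∈ U
    · exact Or.inr hc
    · have hcU' : c ∈ U' := hU' hbc (mem_sdiff.1 ha.prop).1
      exact Or.inl (ha.eq_of_le (mem_sdiff.2 ⟨hcU', hc⟩) hbc).symm
  · exact Or.inr (hU hbc hb)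

theorem exists_isUpperSet_between_card_eq {U U' : Finset β} (hU : IsUpperSet (U : Set β))
    (hU' : IsUpperSet (U' : Set β)) (hUU' : U ⊆ U') {k : ℕ} (hk : #U ≤ k) (hk' : k ≤ #U') :
    ∃ V : Finset β, IsUpperSet (V : Set β) ∧ U ⊆ V ∧ V ⊆ U' ∧ #V = k := by
  induction k, hk using Nat.le_induction with
  | base => exact ⟨U, hU, subset_rfl, hUU', rfl⟩
  | succ k _ ih =>
    obtain ⟨V, hV, hUV, hVU', rfl⟩ := ih (by omega)
    have hne : (U' \ V).Nonempty := sdiff_nonempty.2 fun h => by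
      have := card_le_card h
      omega
    obtain ⟨a, ha⟩ := (U' \ V).exists_maximal hne
    obtain ⟨haU', haV⟩ := mem_sdiff.1 ha.prop
    exact ⟨insert a V, isUpperSet_insert_of_maximal hV hU' ha, hUV.trans (subset_insert a V),
      insert_subset haU' hVU', card_insert_of_notMem haV⟩

theorem exists_isUpperSet_between_odd_card {U U' : Finset β} (hU : IsUpperSet (U : Set β))
    (hU' : IsUpperSet (U' : Set β)) (hUU' : U ⊆ U') (hcard : #U + 3 ≤ #U') :
    ∃ V : Finset β,
      IsUpperSet (V : Set β) ∧ U ⊆ V ∧ V ⊆ U' ∧ #U < #V ∧ #V < #U' ∧ Odd #V := by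
  obtain ⟨k, hk, hk', hodd⟩ : ∃ k, #U < k ∧ k < #U' ∧ Odd k := by
    rcases Nat.even_or_odd #U with h | h
    · exact ⟨#U + 1, by omega, by omega, h.add_one⟩
    · exact ⟨#U + 2, by omega, by omega, h.add_even even_two⟩
  obtain ⟨V, hV, hUV, hVU', rfl⟩ := exists_isUpperSet_between_card_eq hU hU' hUU' hk.le hk'.le
  exact ⟨V, hV, hUV, hVU', hk, hk', hodd⟩

end UpperSets

section SetFamilies

variable {α : Type*} [DecidableEq α]

theorem even_card_of_erase_mem {V : Finset (Finset α)} (hV : IsUpperSet (V : Set (Finset α)))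
    {i : α} (h : ∀ C ∈ V, i ∈ C → C.erase i ∈ V) : Even #V := by
  have hpair : #{C ∈ V | i ∈ C} = #{C ∈ V | i ∉ C} := by
    refine card_nbij' (·.erase i) (insert i) ?_ ?_ ?_ ?_
    · intro C hC
      simp only [coe_filter, Set.mem_ofPred_eq] at hC ⊢
      exact ⟨h C hC.1 hC.2, notMem_erase i C⟩
    · intro C hC
      simp only [coe_filter, Set.mem_ofPred_eq] at hC ⊢
      exact ⟨hV (subset_insert i C) hC.1, mem_insert_self i C⟩
    · intro C hC
      exact insert_erase (mem_filter.1 hC).2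
    · intro C hC
      exact erase_insert (mem_filter.1 hC).2
  rw [← card_filter_add_card_filter_not (i ∈ ·), hpair]
  exact ⟨_, rfl⟩

def minimalSets (V : Finset (Finset α)) : Finset (Finset α) :=
  {A ∈ V | ∀ C ∈ V, C ⊆ A → C = A}

theorem mem_minimalSets {V : Finset (Finset α)} {A : Finset α} :
    A ∈ minimalSets V ↔ A ∈ V ∧ ∀ C ∈ V, C ⊆ A → C = A :=
  mem_filter

theorem isAntichain_minimalSets (V : Finset (Finset α)) :
    IsAntichain (· ⊆ ·) (minimalSets V : Set (Finset α)) := fun _ hA _ hB hne hAB =>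
  hne ((mem_minimalSets.1 hB).2 _ (mem_minimalSets.1 hA).1 hAB)

theorem exists_mem_minimalSets_subset {V : Finset (Finset α)} {A : Finset α} (hA : A ∈ V) :
    ∃ B ∈ minimalSets V, B ⊆ A := by
  obtain ⟨B, hBA, hB⟩ := V.exists_le_minimal hA
  exact ⟨B, mem_minimalSets.2 ⟨hB.prop, fun C hC hCB => (hB.eq_of_ge hC hCB).symm⟩, hBA⟩

variable [Fintype α]

def upClosure (S : Finset (Finset α)) : Finset (Finset α) :=
  {A | ∃ σ ∈ S, σ ⊆ A}

@[simp]
theorem mem_upClosure {S : Finset (Finset α)} {A : Finset α} :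
    A ∈ upClosure S ↔ ∃ σ ∈ S, σ ⊆ A := by
  simp [upClosure]

theorem isUpperSet_upClosure (S : Finset (Finset α)) :
    IsUpperSet (upClosure S : Set (Finset α)) := fun _ _ hAB hA => by
  obtain ⟨σ, hσ, hσA⟩ := mem_upClosure.1 hA
  exact mem_upClosure.2 ⟨σ, hσ, hσA.trans hAB⟩

theorem upClosure_minimalSets {V : Finset (Finset α)} (hV : IsUpperSet (V : Set (Finset α))) :
    upClosure (minimalSets V) = V := by
  ext A
  refine ⟨fun hA => ?_, fun hA => mem_upClosure.2 (exists_mem_minimalSets_subset hA)⟩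
  obtain ⟨σ, hσ, hσA⟩ := mem_upClosure.1 hA
  exact hV hσA (mem_minimalSets.1 hσ).1

theorem IsAntichain.minimalSets_upClosure {S : Finset (Finset α)}
    (hS : IsAntichain (· ⊆ ·) (S : Set (Finset α))) : minimalSets (upClosure S) = S := by
  ext A
  simp only [mem_minimalSets, mem_upClosure]
  constructor
  · rintro ⟨⟨σ, hσ, hσA⟩, hmin⟩
    rwa [← hmin σ ⟨σ, hσ, subset_rfl⟩ hσA]
  · intro hA
    refine ⟨⟨A, hA, subset_rfl⟩, fun C ⟨σ, hσ, hσC⟩ hCA => ?_⟩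
    have hσA : σ = A := hS.eq hσ hA (hσC.trans hCA)
    exact subset_antisymm hCA (hσA ▸ hσC)

def boolFunEquivFinset : (α → Bool) ≃ Finset α where
  toFun s := {i | s i = true}
  invFun A i := decide (i ∈ A)
  left_inv s := by ext i; simp
  right_inv A := by ext i; simp

@[simp]
theorem mem_boolFunEquivFinset {s : α → Bool} {i : α} :
    i ∈ boolFunEquivFinset s ↔ s i = true := by
  simp [boolFunEquivFinset]

end SetFamilies

section AntichainCovers

variable {p : ℕ}

theorem fS_eq_true_iff {S : Finset (Finset (Fin p))} {s : Fin p → Bool} :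
    fS S s = true ↔ boolFunEquivFinset s ∈ upClosure S := by
  simp [fS, subset_iff]

theorem natCard_fS_diff_eq_card_sdiff (S T : Finset (Finset (Fin p))) :
    Nat.card {s : Fin p → Bool // fS T s = true ∧ fS S s = false} =
      #(upClosure T \ upClosure S) := by
  rw [← Nat.card_eq_finsetCard]
  exact Nat.card_congr (boolFunEquivFinset.subtypeEquiv fun s => by
    simp only [← Bool.not_eq_true, fS_eq_true_iff, mem_sdiff])

theorem setOf_fS_ssubset_of_upClosure_ssubset {S T : Finset (Finset (Fin p))}
    (h : upClosure S ⊂ upClosure T) :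
    {s : Fin p → Bool | fS S s = true} ⊂ {s : Fin p → Bool | fS T s = true} := by
  have hsub : {s : Fin p → Bool | fS S s = true} ⊆ {s | fS T s = true} := fun s hs => by
    simp only [Set.mem_ofPred_eq, fS_eq_true_iff] at hs ⊢
    exact h.subset hs
  rw [Set.ssubset_iff_of_subset hsub]
  obtain ⟨A, hAT, hAS⟩ := exists_of_ssubset h
  exact ⟨boolFunEquivFinset.symm A, by simpa [fS_eq_true_iff] using hAT,
    by simpa [fS_eq_true_iff] using hAS⟩

theorem preceq_iff_upClosure_subset {S T : Finset (Finset (Fin p))} :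
    Preceq S T ↔ upClosure S ⊆ upClosure T := by
  refine ⟨fun h A hA => ?_,
    fun h σ hσ => mem_upClosure.1 (h (mem_upClosure.2 ⟨σ, hσ, subset_rfl⟩))⟩
  obtain ⟨σ, hσ, hσA⟩ := mem_upClosure.1 hA
  obtain ⟨τ, hτ, hτσ⟩ := h σ hσ
  exact mem_upClosure.2 ⟨τ, hτ, hτσ.trans hσA⟩

theorem covers_minimalSets {V : Finset (Finset (Fin p))}
    (hV : IsUpperSet (V : Set (Finset (Fin p)))) (hodd : Odd #V) : Covers (minimalSets V) := by
  intro i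
  obtain ⟨C, hC, hiC, hCi⟩ : ∃ C ∈ V, i ∈ C ∧ C.erase i ∉ V := by
    by_contra! h
    exact Nat.not_even_iff_odd.2 hodd (even_card_of_erase_mem hV h)
  obtain ⟨B, hB, hBC⟩ := exists_mem_minimalSets_subset hC
  refine ⟨B, hB, by_contra fun hiB => hCi ?_⟩
  exact hV (subset_erase.2 ⟨hBC, hiB⟩) (mem_minimalSets.1 hB).1

end AntichainCovers

theorem parent_trueStates_diff_card_one_or_two (p : ℕ) (S S' : Finset (Finset (Fin p)))
    (hS : AntichainCover S) (hS' : AntichainCover S') (hpar : Parent S S') :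
    {s : Fin p → Bool | fS S s = true} ⊂ {s : Fin p → Bool | fS S' s = true} ∧
    (Nat.card {s : Fin p → Bool // fS S' s = true ∧ fS S s = false} = 1 ∨
     Nat.card {s : Fin p → Bool // fS S' s = true ∧ fS S s = false} = 2) := by
  obtain ⟨hpre, hne, hnoint⟩ := hpar
  have hsub : upClosure S ⊆ upClosure S' := preceq_iff_upClosure_subset.1 hpre
  have hssub : upClosure S ⊂ upClosure S' := hsub.ssubset_of_ne fun h => hne <| by
    rw [← hS.1.minimalSets_upClosure, h, hS'.1.minimalSets_upClosure]
  refine ⟨setOf_fS_ssubset_of_upClosure_ssubset hssub, ?_⟩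
  rw [natCard_fS_diff_eq_card_sdiff, card_sdiff_of_subset hsub]
  have hlt := card_lt_card hssub
  by_contra! hbig
  obtain ⟨V, hV, hSV, hVS', hSV_lt, hVS'_lt, hodd⟩ := exists_isUpperSet_between_odd_card
    (isUpperSet_upClosure S) (isUpperSet_upClosure S') hsub (by omega)
  have hupV := upClosure_minimalSets hV
  refine hnoint ⟨minimalSets V, ⟨isAntichain_minimalSets V, covers_minimalSets hV hodd⟩,
    ?_, ?_, ?_, ?_⟩
  · intro h
    rw [h] at hupV
    exact hSV_lt.ne (congrArg card hupV)
  · intro h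
    rw [h] at hupV
    exact hVS'_lt.ne (congrArg card hupV).symm
  · rwa [preceq_iff_upClosure_subset, hupV]
  · rwa [preceq_iff_upClosure_subset, hupV]
end

section
/- Let f : (Fin n → Bool) → Bool and i : Fin n. If f is positive in coordinate i and coordinate i is essential for f, then the number of states s : Fin n → Bool with f s ≠ s i is strictly less than 2^(n−1). -/
/-- `f` does not depend on coordinate `i`. -/
def IndepOf {n : ℕ} (f : (Fin n → Bool) → Bool) (i : Fin n) : Prop :=
  ∀ (s : Fin n → Bool) (b : Bool), f (Function.update s i b) = f s

/-- Coordinate `i` is essential for `f`. -/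
def EssentialCoord {n : ℕ} (f : (Fin n → Bool) → Bool) (i : Fin n) : Prop :=
  ∃ s : Fin n → Bool, f (Function.update s i false) ≠ f (Function.update s i true)

/-- `f` is positive in coordinate `i`. -/
def PosIn {n : ℕ} (f : (Fin n → Bool) → Bool) (i : Fin n) : Prop :=
  ∀ s : Fin n → Bool,
    f (Function.update s i false) = true → f (Function.update s i true) = true

/-- `f` is negative in coordinate `i`. -/
def NegIn {n : ℕ} (f : (Fin n → Bool) → Bool) (i : Fin n) : Prop :=
  ∀ s : Fin n → Bool,
    f (Function.update s i true) = true → f (Function.update s i false) = true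

/-- `f` is consistent with the sign vector `ε`: it is nondegenerate and each
coordinate acts with its prescribed sign. -/
def ConsistentWith {n : ℕ} (ε : Fin n → Bool) (f : (Fin n → Bool) → Bool) : Prop :=
  (∀ i : Fin n, EssentialCoord f i) ∧
  ∀ i : Fin n, (ε i = true → PosIn f i) ∧ (ε i = false → NegIn f i)

/-- Number of transitions of `f` at coordinate `i`: states where `f s ≠ s i`. -/
noncomputable def numTrans {n : ℕ} (f : (Fin n → Bool) → Bool) (i : Fin n) : ℕ :=
  Nat.card {s : Fin n → Bool // f s ≠ s i}

/-- Number of increasing transitions of `f` at coordinate `i`. -/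
noncomputable def numInc {n : ℕ} (f : (Fin n → Bool) → Bool) (i : Fin n) : ℕ :=
  Nat.card {s : Fin n → Bool // s i = false ∧ f s = true}

/-- Number of decreasing transitions of `f` at coordinate `i`. -/
noncomputable def numDec {n : ℕ} (f : (Fin n → Bool) → Bool) (i : Fin n) : ℕ :=
  Nat.card {s : Fin n → Bool // s i = true ∧ f s = false}

theorem numTrans_lt_of_positive_essential (n : ℕ) (f : (Fin n → Bool) → Bool) (i : Fin n)
    (hpos : PosIn f i) (hess : EssentialCoord f i) :
    numTrans f i < 2 ^ (n - 1) := by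
  classical
  obtain ⟨w, hw⟩ := hess
  have hf0 : f (Function.update w i false) = false := by
    cases h : f (Function.update w i false) with
    | false => rfl
    | true => exact absurd (h.trans (hpos w h).symm) hw
  have hf1 : f (Function.update w i true) = true := by
    cases h : f (Function.update w i true) with
    | false => exact absurd (hf0.trans h.symm) hw
    | true => rfl
  -- the map from transitions to states with i-th coordinate false
  set g : {s : Fin n → Bool // f s ≠ s i} → {t : Fin n → Bool // t i = false} :=
    fun s => ⟨Function.update s.1 i false, by simp⟩ with hg
  have key : ∀ (s s' : Fin n → Bool),
      Function.update s i false = Function.update s' i false →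
      s = Function.update s' i (s i) := by
    intro s s' h
    have : Function.update (Function.update s i false) i (s i)
        = Function.update (Function.update s' i false) i (s i) := by rw [h]
    simpa using this
  have hinj : Function.Injective g := by
    rintro ⟨s, hs⟩ ⟨s', hs'⟩ h
    simp only [hg, Subtype.mk.injEq] at h ⊢
    have h1 := key s s' h
    by_cases hss : s i = s' i
    · rw [h1, hss, Function.update_eq_self]
    · exfalso
      cases hsi : s i with
      | false =>
        have hsi' : s' i = true := by
          cases h2 : s' i
          · exact (hss (hsi.trans h2.symm)).elim
          · rfl
        have hs0 : s = Function.update s' i false := by rw [h1, hsi]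
        have hfs : f s = true := by
          cases h2 : f s
          · exact (hs (h2.trans hsi.symm)).elim
          · rfl
        have := hpos s' (hs0 ▸ hfs)
        rw [show Function.update s' i true = s' by rw [← hsi', Function.update_eq_self]] at this
        exact hs' (this.trans hsi'.symm)
      | true =>
        have hsi' : s' i = false := by
          cases h2 : s' i
          · rfl
          · exact (hss (hsi.trans h2.symm)).elim
        have h1' := key s' s h.symm
        have hs0 : s' = Function.update s i false := by rw [h1', hsi']
        have hfs' : f s' = true := by
          cases h2 : f s'
          · exact (hs' (h2.trans hsi'.symm)).elim
          · rfl
        have := hpos s (hs0 ▸ hfs')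
        rw [show Function.update s i true = s by rw [← hsi, Function.update_eq_self]] at this
        exact hs (this.trans hsi.symm)
  have hmiss : (⟨Function.update w i false, by simp⟩ :
      {t : Fin n → Bool // t i = false}) ∉ Set.range g := by
    rintro ⟨⟨s, hs⟩, h⟩
    simp only [hg, Subtype.mk.injEq] at h
    have h1 := key s w h
    cases hsi : s i with
    | false =>
      have : s = Function.update w i false := by rw [h1, hsi]
      rw [this] at hs
      exact hs (by simp [hf0])
    | true =>
      have : s = Function.update w i true := by rw [h1, hsi]
      rw [this] at hs
      exact hs (by simp [hf1])
  have hcard : Fintype.card {s : Fin n → Bool // f s ≠ s i}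
      < Fintype.card {t : Fin n → Bool // t i = false} := by
    apply Fintype.card_lt_of_injective_of_notMem g hinj hmiss
  have hcard2 : Fintype.card {t : Fin n → Bool // t i = false} = 2 ^ (n - 1) := by
    have e : {t : Fin n → Bool // t i = false} ≃ ({j : Fin n // j ≠ i} → Bool) :=
      { toFun := fun t j => t.1 j.1
        invFun := fun u => ⟨fun j => if h : j = i then false else u ⟨j, h⟩, by simp⟩
        left_inv := by
          rintro ⟨t, ht⟩
          ext j
          by_cases h : j = i
          · subst h; simp [ht]
          · simp [h]
        right_inv := by
          intro u
          ext j
          simp [j.2] }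
    rw [Fintype.card_congr e, Fintype.card_fun]
    have h2 : Fintype.card {j : Fin n // j ≠ i} = n - 1 := by
      rw [Fintype.card_subtype_compl]
      simp
    rw [h2]
    simp
  rw [numTrans, Nat.card_eq_fintype_card, ← hcard2]
  exact hcard
end

section
/- Let f : (Fin n → Bool) → Bool and i : Fin n. If f is negative in coordinate i and coordinate i is essential for f, then the number of states s : Fin n → Bool with f s ≠ s i is strictly greater than 2^(n−1) and at most 2^n. -/
/-! Pair each state `s` with `s i = false` with its flip `update s i true`. The pair carries an
increasing transition at `s` iff `f s = true` and a decreasing one at the flip iff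
`f (update s i true) = false`. Negativity makes at least one of the two happen for each of the
`2 ^ (n - 1)` pairs, and the pair witnessing essentiality of `i` carries both. -/

open Finset Function

section States

variable {ι : Type*} [Fintype ι] [DecidableEq ι]

lemma card_filter_apply_eq (i : ι) (b : Bool) :
    #{s : ι → Bool | s i = b} = 2 ^ (Fintype.card ι - 1) := by
  have := Fintype.card_filter_piFinset_const_eq_of_mem (univ : Finset Bool) i (mem_univ b)
  rwa [Fintype.piFinset_univ, card_univ, Fintype.card_bool] at this

lemma card_filter_apply_true_and (i : ι) (p : (ι → Bool) → Prop) [DecidablePred p] :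
    #{s : ι → Bool | s i = true ∧ p s} = #{s : ι → Bool | s i = false ∧ p (update s i true)} := by
  refine card_nbij' (update · i false) (update · i true) ?_ ?_ ?_ ?_ <;>
    intro s hs <;> simp only [coe_filter, mem_univ, true_and, Set.mem_ofPred_eq] at hs ⊢
  · simp only [update_self, update_idem, true_and]
    rw [← hs.1, update_eq_self]
    exact hs.2
  · simpa using hs.2
  · simpa using hs.1
  · simpa using hs.1

end States

section Transitions

variable {n : ℕ} {f : (Fin n → Bool) → Bool} {i : Fin n}

lemma numTrans_le_two_pow (f : (Fin n → Bool) → Bool) (i : Fin n) : numTrans f i ≤ 2 ^ n :=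
  calc numTrans f i ≤ Nat.card (Fin n → Bool) := Finite.card_subtype_le _
    _ = 2 ^ n := by simp

lemma numTrans_eq_numInc_add_numDec (f : (Fin n → Bool) → Bool) (i : Fin n) :
    numTrans f i = numInc f i + numDec f i := by
  simp only [numTrans, numInc, numDec, Nat.card_eq_fintype_card, Fintype.card_subtype]
  rw [← card_union_of_disjoint (disjoint_filter.2 fun s _ h h' ↦ by simp_all), ← filter_or]
  congr 1
  ext s
  simp only [mem_filter, mem_univ, true_and]
  generalize f s = a, s i = b
  cases a <;> cases b <;> simp

lemma numDec_eq_card_update_true (f : (Fin n → Bool) → Bool) (i : Fin n) :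
    numDec f i = #{s : Fin n → Bool | s i = false ∧ f (update s i true) = false} := by
  rw [numDec, Nat.card_eq_fintype_card, Fintype.card_subtype, card_filter_apply_true_and]

lemma NegIn.apply_eq_true_of_update_true (hneg : NegIn f i) {s : Fin n → Bool}
    (hs : s i = false) (h : f (update s i true) = true) : f s = true := by
  simpa [← hs] using hneg s h

lemma NegIn.exists_update_false_eq_true_and_update_true_eq_false (hneg : NegIn f i)
    (hess : EssentialCoord f i) :
    ∃ s, f (update s i false) = true ∧ f (update s i true) = false := by
  obtain ⟨s, hs⟩ := hess
  cases h : f (update s i true)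
  · exact ⟨s, by simpa [h] using hs, h⟩
  · exact absurd ((hneg s h).trans h.symm) hs

lemma NegIn.two_pow_lt_numInc_add_numDec (hneg : NegIn f i) (hess : EssentialCoord f i) :
    2 ^ (n - 1) < numInc f i + numDec f i := by
  set A : Finset (Fin n → Bool) := {s : Fin n → Bool | s i = false ∧ f s = true}
  set B : Finset (Fin n → Bool) := {s : Fin n → Bool | s i = false ∧ f (update s i true) = false}
  have hcover : A ∪ B = ({s | s i = false} : Finset (Fin n → Bool)) := by
    ext s
    simp only [A, B, ← filter_or, mem_filter, mem_univ, true_and, ← and_or_left, and_iff_left_iff_imp]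
    intro hs
    cases h : f (update s i true)
    · exact Or.inr rfl
    · exact Or.inl (hneg.apply_eq_true_of_update_true hs h)
  have hboth : (A ∩ B).Nonempty := by
    obtain ⟨s, hs⟩ := hneg.exists_update_false_eq_true_and_update_true_eq_false hess
    exact ⟨update s i false, by simpa [A, B] using hs⟩
  calc 2 ^ (n - 1) = #(A ∪ B) := by rw [hcover, card_filter_apply_eq, Fintype.card_fin]
    _ < #(A ∪ B) + #(A ∩ B) := Nat.lt_add_of_pos_right hboth.card_pos
    _ = numInc f i + numDec f i := by
      rw [card_union_add_card_inter, numDec_eq_card_update_true, numInc, Nat.card_eq_fintype_card,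
        Fintype.card_subtype]

end Transitions

theorem numTrans_gt_of_negative_essential (n : ℕ) (f : (Fin n → Bool) → Bool) (i : Fin n)
    (hneg : NegIn f i) (hess : EssentialCoord f i) :
    2 ^ (n - 1) < numTrans f i ∧ numTrans f i ≤ 2 ^ n :=
  ⟨numTrans_eq_numInc_add_numDec f i ▸ hneg.two_pow_lt_numInc_add_numDec hess,
    numTrans_le_two_pow f i⟩
end

section
/- Let n ≥ 2, i : Fin n, and ε : Fin n → Bool with ε i = true (positive auto-regulation). Define f* : (Fin n → Bool) → Bool by f* s = true iff s i = true and there exists k ≠ i with s k = ε k. Then f* has exactly one transition at i: the number of decreasing transitions of f* at i equals 1 and the number of increasing transitions of f* at i equals 0. Moreover, for every f : (Fin n → Bool) → Bool consistent with ε: if f s = true implies f* s = true for all s, then f has no increasing transitions at i and at least one decreasing transition at i; and if f* s = true implies f s = true for all s, then f has at most one decreasing transition at i. -/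
/-- The maximally functional positive auto-regulation function `f*`. -/
def fstarPos {n : ℕ} (ε : Fin n → Bool) (i : Fin n) : (Fin n → Bool) → Bool :=
  fun s => decide (s i = true ∧ ∃ k : Fin n, k ≠ i ∧ s k = ε k)

/-!
Counting transitions is monotone in the function: enlarging the set where `f` is `true`
can only add increasing transitions and remove decreasing ones. So all claims about a
function `f` squeezed against `f*` follow from the two counts for `f*` itself: `f*` is
`true` only where `s i = true`, so it has no increasing transition, and its unique
decreasing transition is the state with `s i = true` and `s k = !ε k` for all `k ≠ i`.
-/

section Monotonicity

variable {n : ℕ} {f g : (Fin n → Bool) → Bool}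

theorem numInc_le_of_imp (h : ∀ s, f s = true → g s = true) (i : Fin n) :
    numInc f i ≤ numInc g i :=
  Nat.card_le_card_of_injective _
    (Subtype.map_injective (p := fun s => s i = false ∧ f s = true)
      (fun s hs => ⟨hs.1, h s hs.2⟩) Function.injective_id)

theorem numDec_le_of_imp (h : ∀ s, f s = true → g s = true) (i : Fin n) :
    numDec g i ≤ numDec f i :=
  Nat.card_le_card_of_injective _
    (Subtype.map_injective (p := fun s => s i = true ∧ g s = false)
      (fun s hs => ⟨hs.1, Bool.eq_false_iff.2 fun hf => by simp [h s hf] at hs⟩)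
      Function.injective_id)

end Monotonicity

section FStar

variable {n : ℕ} (ε : Fin n → Bool) (i : Fin n)

theorem apply_self_of_fstarPos_eq_true {s : Fin n → Bool} (h : fstarPos ε i s = true) :
    s i = true := by
  simp only [fstarPos, decide_eq_true_eq] at h
  exact h.1

theorem fstarPos_decreasing_iff (s : Fin n → Bool) :
    s i = true ∧ fstarPos ε i s = false ↔ s = Function.update (fun k => !ε k) i true := by
  simp only [fstarPos, decide_eq_false_iff_not, not_and, not_exists]
  constructor
  · rintro ⟨hsi, hs⟩
    funext k
    rcases eq_or_ne k i with rfl | hk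
    · simpa using hsi
    · simpa [hk, Bool.eq_not_iff] using hs hsi k hk
  · rintro rfl
    exact ⟨by simp, fun _ k hk => by simp [hk]⟩

theorem numInc_fstarPos : numInc (fstarPos ε i) i = 0 := by
  have : IsEmpty {s : Fin n → Bool // s i = false ∧ fstarPos ε i s = true} :=
    ⟨fun ⟨s, hsi, hs⟩ => by simp [apply_self_of_fstarPos_eq_true ε i hs] at hsi⟩
  exact Nat.card_of_isEmpty

theorem numDec_fstarPos : numDec (fstarPos ε i) i = 1 :=
  (Nat.card_congr (Equiv.subtypeEquivRight (fstarPos_decreasing_iff ε i))).trans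
    Nat.card_unique

end FStar

theorem fstar_positive_autoregulation_general (n : ℕ) (i : Fin n)
    (ε : Fin n → Bool) :
    numDec (fstarPos ε i) i = 1 ∧
    numInc (fstarPos ε i) i = 0 ∧
    ∀ f : (Fin n → Bool) → Bool, ConsistentWith ε f →
      ((∀ s : Fin n → Bool, f s = true → fstarPos ε i s = true) →
        numInc f i = 0 ∧ 1 ≤ numDec f i) ∧
      ((∀ s : Fin n → Bool, fstarPos ε i s = true → f s = true) →
        numDec f i ≤ 1) := by
  refine ⟨numDec_fstarPos ε i, numInc_fstarPos ε i,
    fun f _ => ⟨fun hle => ⟨?_, ?_⟩, fun hge => ?_⟩⟩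
  · exact Nat.le_zero.1 (numInc_fstarPos ε i ▸ numInc_le_of_imp hle i)
  · exact numDec_fstarPos ε i ▸ numDec_le_of_imp hle i
  · exact numDec_fstarPos ε i ▸ numDec_le_of_imp hge i

theorem fstar_positive_autoregulation (n : ℕ) (hn : 2 ≤ n) (i : Fin n)
    (ε : Fin n → Bool) (hi : ε i = true) :
    numDec (fstarPos ε i) i = 1 ∧
    numInc (fstarPos ε i) i = 0 ∧
    ∀ f : (Fin n → Bool) → Bool, ConsistentWith ε f →
      ((∀ s : Fin n → Bool, f s = true → fstarPos ε i s = true) →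
        numInc f i = 0 ∧ 1 ≤ numDec f i) ∧
      ((∀ s : Fin n → Bool, fstarPos ε i s = true → f s = true) →
        numDec f i ≤ 1) :=
  fstar_positive_autoregulation_general n i ε
end

section
/- For antichain covers S and S' of Fin p with levels ℓ = ℓ(S) of length m = S.card and ℓ' = ℓ(S') of length m' = S'.card, if S ⪯ S' then either (i) there exists an index k < min(m, m') with ℓ_k < ℓ'_k, or (ii) m ≤ m' and ℓ_k = ℓ'_k for every index k < m. -/
/-- The level of `S`: the list of the numbers `p - σ.card` for `σ ∈ S`,
arranged in non-increasing order. -/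
def level {p : ℕ} (S : Finset (Finset (Fin p))) : List ℕ :=
  ((S.val.map fun σ => p - σ.card).sort (· ≤ ·)).reverse

/-!
Induct on `S`. Let `σ ∈ S` be of minimal size, so `p - #σ` heads `level S`, and pick
`σ' ∈ S'` with `σ' ⊆ σ`. Either some member of `S'` is smaller than `σ`, and then already the
heads of the levels satisfy `ℓ₀ < ℓ'₀`, or `σ` is of minimal size in `S'` as well, which forces
`σ' = σ`. Then both levels start with `p - #σ`, and removing `σ` from `S` and `S'` preserves
`S ⪯ S'` because `S` is an antichain.
-/

theorem Multiset.reverse_sort_le_eq_sort_ge {α : Type*} [LinearOrder α] (s : Multiset α) :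
    (s.sort (· ≤ ·)).reverse = s.sort (· ≥ ·) :=
  List.Perm.eq_of_pairwise' (List.pairwise_reverse.mpr (s.pairwise_sort _))
    (s.pairwise_sort _)
    ((List.reverse_perm _).trans (Multiset.coe_eq_coe.mp (by rw [sort_eq, sort_eq])))

theorem Multiset.reverse_sort_cons_of_forall_le {α : Type*} [LinearOrder α] {a : α}
    {s : Multiset α} (h : ∀ b ∈ s, b ≤ a) :
    ((a ::ₘ s).sort (· ≤ ·)).reverse = a :: (s.sort (· ≤ ·)).reverse := by
  simp only [reverse_sort_le_eq_sort_ge]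
  exact Multiset.sort_cons a s (· ≥ ·) h

lemma level_length {p : ℕ} (S : Finset (Finset (Fin p))) : (level S).length = S.card := by
  simp [level]

lemma level_eq_cons_of_forall_card_le {p : ℕ} {S : Finset (Finset (Fin p))}
    {σ : Finset (Fin p)} (hσ : σ ∈ S) (hmin : ∀ τ ∈ S, σ.card ≤ τ.card) :
    level S = (p - σ.card) :: level (S.erase σ) := by
  rw [level, ← Finset.insert_erase hσ, Finset.insert_val_of_notMem (by simp),
    Multiset.map_cons, Multiset.reverse_sort_cons_of_forall_le, Finset.insert_erase hσ, level]
  simp only [Multiset.mem_map, Finset.mem_val, Finset.mem_erase]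
  rintro _ ⟨τ, ⟨-, hτ⟩, rfl⟩
  exact Nat.sub_le_sub_left (hmin τ hτ) p

lemma Preceq.erase {p : ℕ} {S S' : Finset (Finset (Fin p))}
    (hS : IsAntichain (· ⊆ ·) (S : Set (Finset (Fin p)))) (h : Preceq S S')
    {σ : Finset (Fin p)} (hσ : σ ∈ S) : Preceq (S.erase σ) (S'.erase σ) := by
  intro τ hτ
  obtain ⟨hτσ, hτS⟩ := Finset.mem_erase.mp hτ
  obtain ⟨τ', hτ', hsub⟩ := h τ hτS
  refine ⟨τ', Finset.mem_erase.mpr ⟨?_, hτ'⟩, hsub⟩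
  rintro rfl
  exact hS hσ hτS hτσ.symm hsub

def ExistsLtOrPrefix (l l' : List ℕ) : Prop :=
  (∃ k < min l.length l'.length, l.getD k 0 < l'.getD k 0) ∨
    (l.length ≤ l'.length ∧ ∀ k < l.length, l.getD k 0 = l'.getD k 0)

namespace ExistsLtOrPrefix

lemma nil_left (l' : List ℕ) : ExistsLtOrPrefix [] l' :=
  Or.inr ⟨Nat.zero_le _, by simp⟩

lemma cons_of_lt {a a' : ℕ} (h : a < a') (l l' : List ℕ) :
    ExistsLtOrPrefix (a :: l) (a' :: l') :=
  Or.inl ⟨0, by simp, h⟩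

lemma cons {l l' : List ℕ} (h : ExistsLtOrPrefix l l') (a : ℕ) :
    ExistsLtOrPrefix (a :: l) (a :: l') := by
  rcases h with ⟨k, hk, hlt⟩ | ⟨hlen, heq⟩
  · exact Or.inl ⟨k + 1, by simpa using hk, hlt⟩
  · refine Or.inr ⟨by simpa using hlen, ?_⟩
    rintro (_ | k) hk
    · rfl
    · exact heq k (by simpa using hk)

end ExistsLtOrPrefix

theorem existsLtOrPrefix_level {p : ℕ} (S S' : Finset (Finset (Fin p)))
    (hS : IsAntichain (· ⊆ ·) (S : Set (Finset (Fin p)))) (h : Preceq S S') :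
    ExistsLtOrPrefix (level S) (level S') := by
  induction S using Finset.strongInduction generalizing S' with
  | H S ih =>
  rcases S.eq_empty_or_nonempty with rfl | hne
  · simp only [level, Finset.empty_val, Multiset.map_zero, Multiset.sort_zero, List.reverse_nil]
    exact .nil_left _
  obtain ⟨σ, hσ, hσmin⟩ := S.exists_min_image Finset.card hne
  obtain ⟨σ', hσ', hσ'σ⟩ := h σ hσ
  obtain ⟨τ, hτ, hτmin⟩ := S'.exists_min_image Finset.card ⟨σ', hσ'⟩
  by_cases hτσ : τ.card < σ.card
  · rw [level_eq_cons_of_forall_card_le hσ hσmin, level_eq_cons_of_forall_card_le hτ hτmin]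
    exact .cons_of_lt (Nat.sub_lt_sub_left (hτσ.trans_le (card_finset_fin_le σ)) hτσ) _ _
  have hσmin' : ∀ ρ ∈ S', σ.card ≤ ρ.card := fun ρ hρ => (not_lt.mp hτσ).trans (hτmin ρ hρ)
  obtain rfl : σ' = σ := Finset.eq_of_subset_of_card_le hσ'σ (hσmin' σ' hσ')
  rw [level_eq_cons_of_forall_card_le hσ hσmin, level_eq_cons_of_forall_card_le hσ' hσmin']
  exact (ih _ (Finset.erase_ssubset hσ) _ (hS.subset (by simp)) (h.erase hS hσ)).cons _

theorem preceq_level_general (p : ℕ) (S S' : Finset (Finset (Fin p)))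
    (hS : AntichainCover S) (h : Preceq S S') :
    (∃ k < min S.card S'.card, (level S).getD k 0 < (level S').getD k 0) ∨
    (S.card ≤ S'.card ∧ ∀ k < S.card, (level S).getD k 0 = (level S').getD k 0) := by
  simpa only [ExistsLtOrPrefix, level_length] using existsLtOrPrefix_level S S' hS.1 h

theorem preceq_level (p : ℕ) (S S' : Finset (Finset (Fin p)))
    (hS : AntichainCover S) (hS' : AntichainCover S') (h : Preceq S S') :
    (∃ k < min S.card S'.card, (level S).getD k 0 < (level S').getD k 0) ∨
    (S.card ≤ S'.card ∧ ∀ k < S.card, (level S).getD k 0 = (level S').getD k 0) :=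
  preceq_level_general p S S' hS h
end
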